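/- The minimal connection energy between N⁺ and N⁻ satisfies c₀^F = c₀^{F̄} = 4∫₀^{d_N/2} √(f(λ²)) dλ, where c₀^F = inf{c^F(p⁺,p⁻) : p⁺ ∈ N⁺, p⁻ ∈ N⁻} and c₀^{F̄} is the corresponding scalar minimal connection energy. -/

import Mathlib

noncomputable section
open MeasureTheory Metric Set Filter

abbrev Euc (n : ℕ) := EuclideanSpace ℝ (Fin n)

/-- Energies of connecting orbits `ξ` from `p⁻` (at `-∞`) to `p⁺` (at `+∞`). -/
def connEnergies {k : ℕ} (F : Euc k → ℝ) (pp pm : Euc k) : Set ℝ :=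
  { e | ∃ ξ ξd : ℝ → Euc k, (∀ t, HasDerivAt ξ (ξd t) t) ∧
      Filter.Tendsto ξ Filter.atTop (nhds pp) ∧
      Filter.Tendsto ξ Filter.atBot (nhds pm) ∧
      MeasureTheory.Integrable (fun t => ‖ξd t‖ ^ 2 + F (ξ t)) ∧
      e = ∫ t : ℝ, (‖ξd t‖ ^ 2 + F (ξ t)) }

/-- `c^F(p⁺, p⁻)`, the minimal connection energy between `p⁺` and `p⁻`. -/
def cF {k : ℕ} (F : Euc k → ℝ) (pp pm : Euc k) : ℝ := sInf (connEnergies F pp pm)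

/-- `c₀^F`, the minimal connection energy between `N⁺` and `N⁻`. -/
def c0F {k : ℕ} (F : Euc k → ℝ) (Np Nm : Set (Euc k)) : ℝ :=
  sInf { e | ∃ pp ∈ Np, ∃ pm ∈ Nm, e = cF F pp pm }

/-- Energies of scalar connecting orbits from `-d_N/2` to `d_N/2`. -/
def connScalar (Fb : ℝ → ℝ) (dN : ℝ) : Set ℝ :=
  { e | ∃ ζ ζd : ℝ → ℝ, (∀ t, HasDerivAt ζ (ζd t) t) ∧
      Filter.Tendsto ζ Filter.atTop (nhds (dN / 2)) ∧
      Filter.Tendsto ζ Filter.atBot (nhds (-(dN / 2))) ∧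
      MeasureTheory.Integrable (fun t => ζd t ^ 2 + Fb (ζ t)) ∧
      e = ∫ t : ℝ, (ζd t ^ 2 + Fb (ζ t)) }

/-- `c₀^F̄`, the scalar minimal connection energy. -/
def c0Fb (Fb : ℝ → ℝ) (dN : ℝ) : ℝ := sInf (connScalar Fb dN)

set_option maxHeartbeats 1000000

namespace MCE

variable {f : ℝ → ℝ}

/-- the integrand `√(f(l²))` -/
def ev (f : ℝ → ℝ) (l : ℝ) : ℝ := Real.sqrt (f (l ^ 2))

lemma ev_nonneg (f : ℝ → ℝ) (l : ℝ) : 0 ≤ ev f l := Real.sqrt_nonneg _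

lemma ev_cont (hf : ContinuousOn f (Ici 0)) : Continuous (ev f) := by
  have h1 : Continuous fun l : ℝ => f (l ^ 2) :=
    hf.comp_continuous (by continuity) (fun x => sq_nonneg x)
  exact Real.continuous_sqrt.comp h1

lemma ev_sq (hfnn : ∀ t, 0 ≤ t → 0 ≤ f t) (l : ℝ) : ev f l ^ 2 = f (l ^ 2) :=
  Real.sq_sqrt (hfnn _ (sq_nonneg _))

/-- primitive of ev -/
def G (f : ℝ → ℝ) (x : ℝ) : ℝ := ∫ s in (0:ℝ)..x, ev f s

lemma G_hasDerivAt (hf : ContinuousOn f (Ici 0)) (x : ℝ) :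
    HasDerivAt (G f) (ev f x) x := by
  have hc := ev_cont hf
  exact intervalIntegral.integral_hasDerivAt_right
    (hc.intervalIntegrable _ _) (hc.stronglyMeasurableAtFilter _ _) hc.continuousAt

lemma G_continuous (hf : ContinuousOn f (Ici 0)) : Continuous (G f) := by
  exact intervalIntegral.continuous_primitive (fun a b => (ev_cont hf).intervalIntegrable a b) 0

lemma G_sub (hf : ContinuousOn f (Ici 0)) (a b : ℝ) :
    G f b - G f a = ∫ s in a..b, ev f s := by
  exact intervalIntegral.integral_interval_sub_left
    ((ev_cont hf).intervalIntegrable _ _) ((ev_cont hf).intervalIntegrable _ _)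

lemma G_mono (hf : ContinuousOn f (Ici 0)) {a b : ℝ} (hab : a ≤ b) : G f a ≤ G f b := by
  have h : 0 ≤ G f b - G f a := by
    rw [G_sub hf]
    exact intervalIntegral.integral_nonneg hab (fun x _ => ev_nonneg f x)
  linarith

lemma G_bound (hf : ContinuousOn f (Ici 0)) {a b M : ℝ} (hab : a ≤ b)
    (hM : ∀ s ∈ Icc a b, ev f s ≤ M) : G f b - G f a ≤ M * (b - a) := by
  rw [G_sub hf]
  calc ∫ s in a..b, ev f s ≤ ∫ _ in a..b, M := by
        apply intervalIntegral.integral_mono_on hab ((ev_cont hf).intervalIntegrable _ _)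
          (intervalIntegrable_const) hM
    _ = M * (b - a) := by simp [mul_comm]

lemma G_zero : G f 0 = 0 := by simp [G]



/-- even integral: ∫_{-c}^{c} ev f (c - |x|) dx = 2 ∫_0^c ev f -/
lemma even_integral (f : ℝ → ℝ) (hf : ContinuousOn f (Ici 0)) {c : ℝ} (hc : 0 ≤ c) :
    ∫ x in (-c)..c, ev f (c - |x|) = 2 * ∫ x in (0:ℝ)..c, ev f x := by
  have hcont : Continuous fun x : ℝ => ev f (c - |x|) :=
    (ev_cont hf).comp (by continuity)
  have hsplit : ∫ x in (-c)..c, ev f (c - |x|)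
      = (∫ x in (-c)..(0:ℝ), ev f (c - |x|)) + ∫ x in (0:ℝ)..c, ev f (c - |x|) := by
    rw [intervalIntegral.integral_add_adjacent_intervals (hcont.intervalIntegrable _ _)
      (hcont.intervalIntegrable _ _)]
  have hneg : ∫ x in (-c)..(0:ℝ), ev f (c - |x|) = ∫ x in (0:ℝ)..c, ev f (c - |x|) := by
    have := intervalIntegral.integral_comp_neg (a := 0) (b := c) (fun x => ev f (c - |x|))
    simp only [abs_neg, neg_zero] at this
    rw [← this]
  have hpos : ∫ x in (0:ℝ)..c, ev f (c - |x|) = ∫ x in (0:ℝ)..c, ev f x := by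
    have hcg : ∫ x in (0:ℝ)..c, ev f (c - x) = ∫ x in (0:ℝ)..c, ev f (c - |x|) := by
      apply intervalIntegral.integral_congr
      intro x hx
      rw [uIcc_of_le hc] at hx
      simp only []
      rw [abs_of_nonneg hx.1]
    rw [← hcg, intervalIntegral.integral_comp_sub_left (fun x => ev f x) c]
    norm_num
  rw [hsplit, hneg, hpos]; ring

variable {f : ℝ → ℝ} {c₁ c₂ c₃ δN : ℝ}

lemma f_zero (hfnn : ∀ t, 0 ≤ t → 0 ≤ f t) (hc₂ : 0 < c₂) (hδN : 0 < δN)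
    (hH1 : ∀ t, 0 ≤ t → t ≤ δN ^ 2 → c₁ * t ≤ f t ∧ f t ≤ c₂ * t) : f 0 = 0 := by
  have h1 := (hH1 0 le_rfl (by positivity)).2
  have h2 := hfnn 0 le_rfl
  simp at h1; linarith

lemma f_pos (hc₁ : 0 < c₁) (hc₃ : 0 < c₃)
    (hH1 : ∀ t, 0 ≤ t → t ≤ δN ^ 2 → c₁ * t ≤ f t ∧ f t ≤ c₂ * t)
    (hH2 : ∀ t, δN ^ 2 ≤ t → c₃ ≤ f t) {t : ℝ} (ht : 0 < t) : 0 < f t := by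
  rcases le_or_gt t (δN ^ 2) with h | h
  · have := (hH1 t ht.le h).1; nlinarith
  · have := hH2 t h.le; linarith

section Geom
variable {k : ℕ} {Np Nm : Set (EuclideanSpace ℝ (Fin k))} {dN : ℝ}

lemma infDist_union_min (z : EuclideanSpace ℝ (Fin k)) (hNp : Np.Nonempty) (hNm : Nm.Nonempty) :
    infDist z (Np ∪ Nm) = min (infDist z Np) (infDist z Nm) := by
  unfold infDist
  rw [EMetric.infEdist_union]
  rcases le_total (infEDist z Np) (infEDist z Nm) with h | h
  · rw [min_eq_left h, min_eq_left (ENNReal.toReal_mono (Metric.infEdist_ne_top hNm) h)]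
  · rw [min_eq_right h, min_eq_right (ENNReal.toReal_mono (Metric.infEdist_ne_top hNp) h)]

lemma dN_le_dist (hdN : dN = sInf {r | ∃ p ∈ Np, ∃ q ∈ Nm, r = dist p q})
    {p q : EuclideanSpace ℝ (Fin k)} (hp : p ∈ Np) (hq : q ∈ Nm) : dN ≤ dist p q := by
  rw [hdN]
  apply csInf_le
  · exact ⟨0, fun r hr => by obtain ⟨a, _, b, _, rfl⟩ := hr; positivity⟩
  · exact ⟨p, hp, q, hq, rfl⟩

lemma sum_infDist_ge (hNpK : IsCompact Np) (hNmK : IsCompact Nm)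
    (hNp : Np.Nonempty) (hNm : Nm.Nonempty)
    (hdN : dN = sInf {r | ∃ p ∈ Np, ∃ q ∈ Nm, r = dist p q})
    (z : EuclideanSpace ℝ (Fin k)) : dN ≤ infDist z Np + infDist z Nm := by
  obtain ⟨p, hp, hdp⟩ := hNpK.exists_infDist_eq_dist hNp z
  obtain ⟨q, hq, hdq⟩ := hNmK.exists_infDist_eq_dist hNm z
  calc dN ≤ dist p q := dN_le_dist hdN hp hq
    _ ≤ dist p z + dist z q := dist_triangle _ _ _
    _ = infDist z Np + infDist z Nm := by rw [hdp, hdq, dist_comm z p]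

lemma exists_min_pair (hNpK : IsCompact Np) (hNmK : IsCompact Nm)
    (hNp : Np.Nonempty) (hNm : Nm.Nonempty)
    (hdN : dN = sInf {r | ∃ p ∈ Np, ∃ q ∈ Nm, r = dist p q}) :
    ∃ p ∈ Np, ∃ q ∈ Nm, dist p q = dN := by
  have himg : {r | ∃ p ∈ Np, ∃ q ∈ Nm, r = dist p q}
      = (fun pq : _ × _ => dist pq.1 pq.2) '' (Np ×ˢ Nm) := by
    ext r
    constructor
    · rintro ⟨p, hp, q, hq, rfl⟩; exact ⟨(p, q), ⟨hp, hq⟩, rfl⟩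
    · rintro ⟨⟨p, q⟩, ⟨hp, hq⟩, rfl⟩; exact ⟨p, hp, q, hq, rfl⟩
  have hK : IsCompact ((fun pq : _ × _ => dist pq.1 pq.2) '' (Np ×ˢ Nm)) :=
    (hNpK.prod hNmK).image (continuous_dist)
  have hne : ((fun pq : _ × _ => dist pq.1 pq.2) '' (Np ×ˢ Nm)).Nonempty :=
    ⟨_, ⟨(hNp.some, hNm.some), ⟨hNp.some_mem, hNm.some_mem⟩, rfl⟩⟩
  have := hK.sInf_mem hne
  rw [← himg, ← hdN] at this
  obtain ⟨p, hp, q, hq, h⟩ := this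
  exact ⟨p, hp, q, hq, h.symm⟩

end Geom
section Seg
variable {k : ℕ} {Np Nm : Set (EuclideanSpace ℝ (Fin k))} {dN : ℝ}

lemma segment_infDist (hNpK : IsCompact Np) (hNmK : IsCompact Nm)
    (hNp : Np.Nonempty) (hNm : Nm.Nonempty)
    (hdN : dN = sInf {r | ∃ p ∈ Np, ∃ q ∈ Nm, r = dist p q}) (hdNpos : 0 < dN)
    {pp pm : EuclideanSpace ℝ (Fin k)} (hpp : pp ∈ Np) (hpm : pm ∈ Nm)
    (hd : dist pp pm = dN) {x : ℝ} (hx : |x| ≤ dN / 2) :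
    infDist (pm + (dN / 2 + x) • (dN⁻¹ • (pp - pm))) (Np ∪ Nm) = dN / 2 - |x| := by
  set u := dN⁻¹ • (pp - pm) with hu_def
  set z := pm + (dN / 2 + x) • u with hz_def
  have hxle : x ≤ dN / 2 := (abs_le.mp hx).2
  have hxge : -(dN / 2) ≤ x := (abs_le.mp hx).1
  have hnorm : ‖pp - pm‖ = dN := by rw [← dist_eq_norm]; exact hd
  have hu : ‖u‖ = 1 := by
    rw [hu_def, norm_smul, hnorm]
    rw [Real.norm_eq_abs, abs_of_pos (inv_pos.mpr hdNpos), inv_mul_cancel₀ hdNpos.ne']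
  have hpp' : pp = pm + dN • u := by
    rw [hu_def, smul_smul, mul_inv_cancel₀ hdNpos.ne', one_smul]; abel
  have h1 : dist z pp = dN / 2 - x := by
    rw [dist_eq_norm]
    have hzpp : z - pp = (x - dN / 2) • u := by
      rw [hz_def, hpp']; module
    rw [hzpp, norm_smul, hu]
    rw [Real.norm_eq_abs, abs_of_nonpos (by linarith)]
    ring
  have h2 : dist z pm = dN / 2 + x := by
    rw [dist_eq_norm]
    have hzpm : z - pm = (dN / 2 + x) • u := by rw [hz_def]; module
    rw [hzpm, norm_smul, hu, Real.norm_eq_abs, abs_of_nonneg (by linarith)]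
    ring
  have hA : infDist z Np ≤ dN / 2 - x := h1 ▸ infDist_le_dist_of_mem hpp
  have hB : infDist z Nm ≤ dN / 2 + x := h2 ▸ infDist_le_dist_of_mem hpm
  have hsum := sum_infDist_ge hNpK hNmK hNp hNm hdN z
  have heqA : infDist z Np = dN / 2 - x := le_antisymm hA (by linarith)
  have heqB : infDist z Nm = dN / 2 + x := le_antisymm hB (by linarith)
  rw [infDist_union_min z hNp hNm, heqA, heqB]
  rcases le_or_gt 0 x with h | h
  · rw [abs_of_nonneg h, min_eq_left (by linarith)]
  · rw [abs_of_neg h, min_eq_right (by linarith)]; ring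

end Seg

section FbBasic
variable {f Fb : ℝ → ℝ} {dN : ℝ}

lemma Fb_abs (hFbm : ∀ s : ℝ, s ≤ 0 → Fb s = f ((dN / 2 + s) ^ 2))
    (hFbp : ∀ s : ℝ, 0 ≤ s → Fb s = f ((dN / 2 - s) ^ 2)) (x : ℝ) :
    Fb x = f ((dN / 2 - |x|) ^ 2) := by
  rcases le_or_gt 0 x with h | h
  · rw [hFbp x h, abs_of_nonneg h]
  · rw [hFbm x h.le, abs_of_neg h]; ring_nf

lemma Fb_eq_ev_sq (hfnn : ∀ t, 0 ≤ t → 0 ≤ f t)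
    (hFbm : ∀ s : ℝ, s ≤ 0 → Fb s = f ((dN / 2 + s) ^ 2))
    (hFbp : ∀ s : ℝ, 0 ≤ s → Fb s = f ((dN / 2 - s) ^ 2)) (x : ℝ) :
    Fb x = ev f (dN / 2 - |x|) ^ 2 := by
  rw [Fb_abs hFbm hFbp, ev_sq hfnn]

lemma Fb_nonneg (hfnn : ∀ t, 0 ≤ t → 0 ≤ f t)
    (hFbm : ∀ s : ℝ, s ≤ 0 → Fb s = f ((dN / 2 + s) ^ 2))
    (hFbp : ∀ s : ℝ, 0 ≤ s → Fb s = f ((dN / 2 - s) ^ 2)) (x : ℝ) : 0 ≤ Fb x := by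
  rw [Fb_abs hFbm hFbp]; exact hfnn _ (sq_nonneg _)

lemma Fb_continuous (hf : ContinuousOn f (Ici 0))
    (hFbm : ∀ s : ℝ, s ≤ 0 → Fb s = f ((dN / 2 + s) ^ 2))
    (hFbp : ∀ s : ℝ, 0 ≤ s → Fb s = f ((dN / 2 - s) ^ 2)) : Continuous Fb := by
  have : Fb = fun x => f ((dN / 2 - |x|) ^ 2) := funext (Fb_abs hFbm hFbp)
  rw [this]
  exact hf.comp_continuous (by continuity) (fun x => mem_Ici.mpr (sq_nonneg _))

end FbBasic
section Prim
/-- generic primitive of a continuous function -/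
def Prim (g : ℝ → ℝ) (x : ℝ) : ℝ := ∫ s in (0:ℝ)..x, g s

variable {g : ℝ → ℝ}

lemma Prim_hasDerivAt (hg : Continuous g) (x : ℝ) : HasDerivAt (Prim g) (g x) x :=
  intervalIntegral.integral_hasDerivAt_right (hg.intervalIntegrable _ _)
    (hg.stronglyMeasurableAtFilter _ _) hg.continuousAt

lemma Prim_continuous (hg : Continuous g) : Continuous (Prim g) :=
  intervalIntegral.continuous_primitive (fun a b => hg.intervalIntegrable a b) 0

lemma Prim_sub (hg : Continuous g) (a b : ℝ) :
    Prim g b - Prim g a = ∫ s in a..b, g s :=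
  intervalIntegral.integral_interval_sub_left (hg.intervalIntegrable _ _)
    (hg.intervalIntegrable _ _)

lemma Prim_mono (hg : Continuous g) (hg0 : ∀ x, 0 ≤ g x) {a b : ℝ} (hab : a ≤ b) :
    Prim g a ≤ Prim g b := by
  have h : 0 ≤ Prim g b - Prim g a := by
    rw [Prim_sub hg]
    exact intervalIntegral.integral_nonneg hab (fun x _ => hg0 x)
  linarith

end Prim

section Hetero

variable {f : ℝ → ℝ} {c₁ c₂ c₃ δN dN : ℝ}

lemma exists_heteroclinic (hf : ContinuousOn f (Ici 0)) (hfnn : ∀ t, 0 ≤ t → 0 ≤ f t)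
    (hc₁ : 0 < c₁) (hc₂ : 0 < c₂) (hc₃ : 0 < c₃) (hδN : 0 < δN) (hdNpos : 0 < dN)
    (hδNdN : 2 * δN < dN)
    (hH1 : ∀ t, 0 ≤ t → t ≤ δN ^ 2 → c₁ * t ≤ f t ∧ f t ≤ c₂ * t)
    (hH2 : ∀ t, δN ^ 2 ≤ t → c₃ ≤ f t) :
    ∃ ζ ζd : ℝ → ℝ, (∀ t, HasDerivAt ζ (ζd t) t) ∧ (∀ t, |ζ t| < dN / 2) ∧
      Tendsto ζ atTop (nhds (dN / 2)) ∧ Tendsto ζ atBot (nhds (-(dN / 2))) ∧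
      Integrable (fun t => ζd t ^ 2 + ev f (dN / 2 - |ζ t|) ^ 2) ∧
      (∫ t, (ζd t ^ 2 + ev f (dN / 2 - |ζ t|) ^ 2))
        = 4 * ∫ l in (0:ℝ)..(dN / 2), ev f l := by
  set c := dN / 2 with hc_def
  have hcpos : 0 < c := by positivity
  set P : ℝ → ℝ := fun x => ev f (c - |x|) with hP_def
  have hPcont : Continuous P := (ev_cont hf).comp (by continuity)
  have hPnn : ∀ x, 0 ≤ P x := fun x => ev_nonneg f _
  have hPpos : ∀ x ∈ Ioo (-c) c, 0 < P x := by
    intro x hx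
    have h1 : |x| < c := abs_lt.mpr ⟨hx.1, hx.2⟩
    have h2 : 0 < c - |x| := by linarith
    exact Real.sqrt_pos.mpr (f_pos hc₁ hc₃ hH1 hH2 (by positivity))
  set Q : ℝ → ℝ := fun x => (P x)⁻¹ with hQ_def
  have hQnn : ∀ x, 0 ≤ Q x := fun x => inv_nonneg.mpr (hPnn x)
  have hQpos : ∀ x ∈ Ioo (-c) c, 0 < Q x := fun x hx => inv_pos.mpr (hPpos x hx)
  have hQmeas : Measurable Q := (hPcont.measurable).inv
  have hQcontAt : ∀ x ∈ Ioo (-c) c, ContinuousAt Q x := fun x hx =>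
    (hPcont.continuousAt).inv₀ (hPpos x hx).ne'
  have hQcontOn : ∀ a b : ℝ, a ∈ Ioo (-c) c → b ∈ Ioo (-c) c →
      ContinuousOn Q (uIcc a b) := by
    intro a b ha hb
    intro x hx
    exact (hQcontAt x (Set.ordConnected_Ioo.uIcc_subset ha hb hx)).continuousWithinAt
  have hQint : ∀ a b : ℝ, a ∈ Ioo (-c) c → b ∈ Ioo (-c) c →
      IntervalIntegrable Q volume a b := fun a b ha hb =>
    (hQcontOn a b ha hb).intervalIntegrable
  have h0mem : (0:ℝ) ∈ Ioo (-c) c := by constructor <;> simp [hcpos] <;> linarith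
  set τ : ℝ → ℝ := fun x => ∫ s in (0:ℝ)..x, Q s with hτ_def
  have hτderiv : ∀ x ∈ Ioo (-c) c, HasDerivAt τ (Q x) x := by
    intro x hx
    exact intervalIntegral.integral_hasDerivAt_right (hQint 0 x h0mem hx)
      ⟨univ, univ_mem, (hQmeas.stronglyMeasurable).aestronglyMeasurable.restrict⟩
      (hQcontAt x hx)
  have hτcont : ContinuousOn τ (Ioo (-c) c) := fun x hx =>
    ((hτderiv x hx).continuousAt).continuousWithinAt
  have hτsub : ∀ a b : ℝ, a ∈ Ioo (-c) c → b ∈ Ioo (-c) c →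
      τ b - τ a = ∫ s in a..b, Q s := fun a b ha hb =>
    intervalIntegral.integral_interval_sub_left (hQint 0 b h0mem hb) (hQint 0 a h0mem ha)
  have hτmono : StrictMonoOn τ (Ioo (-c) c) := by
    intro a ha b hb hab
    have h : 0 < τ b - τ a := by
      rw [hτsub a b ha hb]
      apply intervalIntegral.intervalIntegral_pos_of_pos_on
        (hQint a b ha hb) _ hab
      intro x hx
      exact hQpos x (Set.ordConnected_Ioo.out ha hb ⟨le_of_lt hx.1, le_of_lt hx.2⟩)
    linarith
  -- τ is odd
  have hτodd : ∀ x : ℝ, τ (-x) = - τ x := by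
    intro x
    have h1 : ∫ s in (0:ℝ)..x, Q (-s) = ∫ s in (-x)..(0:ℝ), Q s := by
      have := intervalIntegral.integral_comp_neg (a := (0:ℝ)) (b := x) Q
      simpa using this
    have h2 : ∀ s : ℝ, Q (-s) = Q s := by
      intro s; simp only [hQ_def, hP_def, abs_neg]
    simp only [h2] at h1
    have h3 : τ x = ∫ s in (-x)..(0:ℝ), Q s := by rw [← h1]
    rw [hτ_def]
    simp only
    rw [intervalIntegral.integral_symm, ← h3]
  -- τ is unbounded above
  have hτ_above : ∀ M : ℝ, ∃ y ∈ Ioo (-c) c, M < τ y := by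
    intro M
    set x₁ := max 0 (c - δN) with hx₁_def
    have hx₁0 : 0 ≤ x₁ := le_max_left _ _
    have hx₁c : x₁ < c := max_lt hcpos (by linarith)
    have hx₁mem : x₁ ∈ Ioo (-c) c := ⟨by linarith, hx₁c⟩
    have hx₁δ : c - x₁ ≤ δN := by
      have := le_max_right 0 (c - δN); linarith [le_max_right 0 (c - δN)]
    set s2 := Real.sqrt c₂ with hs2_def
    have hs2pos : 0 < s2 := Real.sqrt_pos.mpr hc₂
    set r := min ((c - x₁)/2) (Real.exp (Real.log (c - x₁) - s2 * (M - τ x₁ + 1)))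
      with hr_def
    have hr0 : 0 < r := lt_min (by linarith) (Real.exp_pos _)
    set y := c - r with hy_def
    have hyx₁ : x₁ < y := by
      have : r ≤ (c - x₁)/2 := min_le_left _ _
      have : y ≥ c - (c - x₁)/2 := by rw [hy_def]; linarith
      linarith
    have hymem : y ∈ Ioo (-c) c := ⟨by linarith, by rw [hy_def]; linarith⟩
    refine ⟨y, hymem, ?_⟩
    -- pointwise bound on Q
    have hptwise : ∀ s ∈ Icc x₁ y, (s2 * (c - s))⁻¹ ≤ Q s := by
      intro s hs
      have hs0 : 0 ≤ s := le_trans hx₁0 hs.1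
      have hsy : s ≤ y := hs.2
      have hcs0 : 0 < c - s := by rw [hy_def] at hsy; linarith
      have hcsδ : c - s ≤ δN := by linarith [hs.1]
      have hsq : (c - s)^2 ≤ δN^2 := by nlinarith
      have hfs : f ((c - s)^2) ≤ c₂ * (c - s)^2 := (hH1 _ (sq_nonneg _) hsq).2
      have hPs : P s ≤ s2 * (c - s) := by
        have h1 : P s = Real.sqrt (f ((c - s)^2)) := by
          simp only [hP_def, ev, abs_of_nonneg hs0]
        rw [h1, hs2_def]
        calc Real.sqrt (f ((c - s)^2)) ≤ Real.sqrt (c₂ * (c - s)^2) :=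
              Real.sqrt_le_sqrt hfs
          _ = Real.sqrt c₂ * (c - s) := by
              rw [Real.sqrt_mul hc₂.le, Real.sqrt_sq hcs0.le]
      have hsmem : s ∈ Ioo (-c) c := ⟨by linarith, by linarith⟩
      have hPspos : 0 < P s := hPpos s hsmem
      exact inv_anti₀ hPspos hPs
    -- integral comparison
    have hlow_cont : ContinuousOn (fun s => (s2 * (c - s))⁻¹) (uIcc x₁ y) := by
      rw [uIcc_of_le hyx₁.le]
      apply ContinuousOn.inv₀
      · fun_prop
      · intro s hs
        have : 0 < c - s := by
          have := hs.2; rw [hy_def] at this; linarith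
        positivity
    have hint1 : τ y - τ x₁ ≥ ∫ s in x₁..y, (s2 * (c - s))⁻¹ := by
      rw [hτsub x₁ y hx₁mem hymem]
      apply intervalIntegral.integral_mono_on hyx₁.le hlow_cont.intervalIntegrable
        (hQint x₁ y hx₁mem hymem) hptwise
    have hcomp : ∫ s in x₁..y, (s2 * (c - s))⁻¹
        = s2⁻¹ * (Real.log (c - x₁) - Real.log r) := by
      have h1 : ∀ s : ℝ, (s2 * (c - s))⁻¹ = s2⁻¹ * (c - s)⁻¹ := by
        intro s; rw [mul_inv]
      simp only [h1]
      rw [intervalIntegral.integral_const_mul]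
      congr 1
      have h2 : ∫ s in x₁..y, (c - s)⁻¹ = ∫ u in (c - y)..(c - x₁), u⁻¹ :=
        intervalIntegral.integral_comp_sub_left (fun u => u⁻¹) c
      rw [h2]
      have hcy : c - y = r := by rw [hy_def]; ring
      rw [hcy, integral_inv]
      · rw [Real.log_div (by linarith) hr0.ne']
      · intro h
        rw [uIcc_of_le (by linarith : r ≤ c - x₁)] at h
        exact absurd h.1 (by linarith)
    have hlogr : Real.log r ≤ Real.log (c - x₁) - s2 * (M - τ x₁ + 1) := by
      calc Real.log r ≤ Real.log (Real.exp (Real.log (c - x₁) - s2 * (M - τ x₁ + 1))) := by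
            apply Real.log_le_log hr0 (min_le_right _ _)
        _ = _ := Real.log_exp _
    have : s2⁻¹ * (Real.log (c - x₁) - Real.log r) ≥ M - τ x₁ + 1 := by
      have h1 : Real.log (c - x₁) - Real.log r ≥ s2 * (M - τ x₁ + 1) := by linarith
      calc s2⁻¹ * (Real.log (c - x₁) - Real.log r) ≥ s2⁻¹ * (s2 * (M - τ x₁ + 1)) := by
            apply mul_le_mul_of_nonneg_left h1 (by positivity)
        _ = M - τ x₁ + 1 := by field_simp
    rw [hcomp] at hint1
    linarith
  have hτ_below : ∀ M : ℝ, ∃ y ∈ Ioo (-c) c, τ y < M := by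
    intro M
    obtain ⟨y, hy, hτy⟩ := hτ_above (-M)
    refine ⟨-y, ⟨by linarith [hy.2], by linarith [hy.1]⟩, ?_⟩
    rw [hτodd y]; linarith
  -- existence of inverse
  have hexists : ∀ t : ℝ, ∃ x, x ∈ Ioo (-c) c ∧ τ x = t := by
    intro t
    obtain ⟨yp, hyp, hτyp⟩ := hτ_above t
    obtain ⟨ym, hym, hτym⟩ := hτ_below t
    have hymyp : ym < yp := by
      by_contra h
      push_neg at h
      rcases eq_or_lt_of_le h with h' | h'
      · rw [← h'] at hτym; linarith
      · have := hτmono hyp hym h'; linarith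
    have hIcc : Icc ym yp ⊆ Ioo (-c) c := Set.ordConnected_Ioo.out hym hyp
    have hIVT := intermediate_value_Icc hymyp.le (hτcont.mono hIcc)
    have ht : t ∈ Icc (τ ym) (τ yp) := ⟨hτym.le, hτyp.le⟩
    obtain ⟨x, hx, hτx⟩ := hIVT ht
    exact ⟨x, hIcc hx, hτx⟩
  choose ζ hζ using hexists
  have hζmem : ∀ t, ζ t ∈ Ioo (-c) c := fun t => (hζ t).1
  have hζτ : ∀ t, τ (ζ t) = t := fun t => (hζ t).2
  have hζlt : ∀ t, |ζ t| < c := fun t => abs_lt.mpr ⟨(hζmem t).1, (hζmem t).2⟩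
  have hcomp₁ : ∀ x ∈ Ioo (-c) c, ∀ t, τ x < t → x < ζ t := by
    intro x hx t h
    by_contra hle
    push_neg at hle
    have := hτmono.monotoneOn (hζmem t) hx hle
    rw [hζτ] at this
    linarith
  have hcomp₂ : ∀ x ∈ Ioo (-c) c, ∀ t, t < τ x → ζ t < x := by
    intro x hx t h
    by_contra hle
    push_neg at hle
    have := hτmono.monotoneOn hx (hζmem t) hle
    rw [hζτ] at this
    linarith
  have hζcont : Continuous ζ := by
    rw [continuous_iff_continuousAt]
    intro a
    rw [ContinuousAt, tendsto_order]
    constructor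
    · intro x hx
      have hmem_a := hζmem a
      set x' := max x ((-c + ζ a)/2) with hx'_def
      have hx'mem : x' ∈ Ioo (-c) c :=
        ⟨lt_of_lt_of_le (by linarith [hmem_a.1]) (le_max_right _ _),
         max_lt (lt_trans hx hmem_a.2) (by linarith [hmem_a.2])⟩
      have hx'lt : x' < ζ a := max_lt hx (by linarith [hmem_a.1])
      have hτx' : τ x' < a := by
        have := hτmono hx'mem hmem_a hx'lt
        rw [hζτ] at this; exact this
      filter_upwards [Ioi_mem_nhds hτx'] with t ht
      exact lt_of_le_of_lt (le_max_left _ _) (hcomp₁ x' hx'mem t ht)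
    · intro x hx
      have hmem_a := hζmem a
      set x' := min x ((c + ζ a)/2) with hx'_def
      have hx'mem : x' ∈ Ioo (-c) c :=
        ⟨lt_min (lt_trans hmem_a.1 hx) (by linarith [hmem_a.1]),
         lt_of_le_of_lt (min_le_right _ _) (by linarith [hmem_a.2])⟩
      have hx'gt : ζ a < x' := lt_min hx (by linarith [hmem_a.2])
      have hτx' : a < τ x' := by
        have := hτmono hmem_a hx'mem hx'gt
        rw [hζτ] at this; exact this
      filter_upwards [Iio_mem_nhds hτx'] with t ht
      exact lt_of_lt_of_le (hcomp₂ x' hx'mem t ht) (min_le_left _ _)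
  have hζderiv : ∀ t, HasDerivAt ζ (P (ζ t)) t := by
    intro t
    have h1 := hτderiv (ζ t) (hζmem t)
    have h2 := HasDerivAt.of_local_left_inverse (hζcont.continuousAt) h1
      ((hQpos _ (hζmem t)).ne') (Filter.Eventually.of_forall (fun y => hζτ y))
    have h3 : (Q (ζ t))⁻¹ = P (ζ t) := inv_inv _
    rw [h3] at h2
    exact h2
  have hζtop : Tendsto ζ atTop (nhds c) := by
    rw [tendsto_order]
    constructor
    · intro x hx
      set x' := max x 0 with hx'_def
      have hx'mem : x' ∈ Ioo (-c) c :=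
        ⟨lt_of_lt_of_le (by linarith) (le_max_right _ _), max_lt hx hcpos⟩
      filter_upwards [Ioi_mem_atTop (τ x')] with t ht
      exact lt_of_le_of_lt (le_max_left _ _) (hcomp₁ x' hx'mem t ht)
    · intro x hx
      filter_upwards with t
      exact lt_trans (hζmem t).2 hx
  have hζbot : Tendsto ζ atBot (nhds (-c)) := by
    rw [tendsto_order]
    constructor
    · intro x hx
      filter_upwards with t
      exact lt_trans hx (hζmem t).1
    · intro x hx
      set x' := min x 0 with hx'_def
      have hx'mem : x' ∈ Ioo (-c) c :=
        ⟨lt_min (by linarith) (by linarith), lt_of_le_of_lt (min_le_right _ _) hcpos⟩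
      filter_upwards [Iio_mem_atBot (τ x')] with t ht
      exact lt_of_lt_of_le (hcomp₂ x' hx'mem t ht) (min_le_left _ _)
  -- energy
  refine ⟨ζ, fun t => P (ζ t), hζderiv, hζlt, hζtop, hζbot, ?_, ?_⟩
  all_goals {
    have hPζcont : Continuous fun t => P (ζ t) := hPcont.comp hζcont
    have he_cont : Continuous fun t => P (ζ t) ^ 2 + ev f (c - |ζ t|) ^ 2 := by
      have : (fun t => P (ζ t) ^ 2 + ev f (c - |ζ t|) ^ 2)
          = fun t => P (ζ t) ^ 2 + P (ζ t) ^ 2 := rfl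
      rw [this]; fun_prop
    have hcomp_deriv : ∀ t : ℝ, HasDerivAt (fun u => Prim P (ζ u)) (P (ζ t) * P (ζ t)) t :=
      fun t => (Prim_hasDerivAt hPcont (ζ t)).comp t (hζderiv t)
    have hFTC : ∀ a b : ℝ, (∫ t in a..b, (P (ζ t) ^ 2 + ev f (c - |ζ t|) ^ 2))
        = 2 * (Prim P (ζ b) - Prim P (ζ a)) := by
      intro a b
      have h1 : (∫ t in a..b, (P (ζ t) * P (ζ t))) = Prim P (ζ b) - Prim P (ζ a) :=
        intervalIntegral.integral_eq_sub_of_hasDerivAt (fun x _ => hcomp_deriv x)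
          ((hPζcont.mul hPζcont).intervalIntegrable a b)
      have h2 : (∫ t in a..b, (P (ζ t) ^ 2 + ev f (c - |ζ t|) ^ 2))
          = ∫ t in a..b, 2 * (P (ζ t) * P (ζ t)) := by
        apply intervalIntegral.integral_congr
        intro x _
        show P (ζ x) ^ 2 + P (ζ x) ^ 2 = _
        ring
      rw [h2, intervalIntegral.integral_const_mul, h1]
    have hbound : ∀ a b : ℝ, a ≤ b → (∫ t in a..b, (P (ζ t) ^ 2 + ev f (c - |ζ t|) ^ 2))
        ≤ 2 * (Prim P c - Prim P (-c)) := by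
      intro a b _
      rw [hFTC]
      have m1 : Prim P (ζ b) ≤ Prim P c := Prim_mono hPcont hPnn (hζmem b).2.le
      have m2 : Prim P (-c) ≤ Prim P (ζ a) := Prim_mono hPcont hPnn (hζmem a).1.le
      linarith
    have ha' : Tendsto (fun n : ℕ => -(n:ℝ)) atTop atBot :=
      tendsto_neg_atBot_iff.mpr tendsto_natCast_atTop_atTop
    have hb' : Tendsto (fun n : ℕ => (n:ℝ)) atTop atTop := tendsto_natCast_atTop_atTop
    have hInt : Integrable (fun t => P (ζ t) ^ 2 + ev f (c - |ζ t|) ^ 2) := by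
      apply MeasureTheory.integrable_of_intervalIntegral_norm_bounded
        (a := fun n : ℕ => -(n:ℝ)) (b := fun n : ℕ => (n:ℝ))
        (2 * (Prim P c - Prim P (-c)))
        (fun n => (he_cont.intervalIntegrable _ _).1) ha' hb'
      filter_upwards with n
      have hle : -(n:ℝ) ≤ n := by
        have := Nat.cast_nonneg (α := ℝ) n
        linarith
      have : (∫ x in -(n:ℝ)..(n:ℝ), ‖P (ζ x) ^ 2 + ev f (c - |ζ x|) ^ 2‖)
          = ∫ x in -(n:ℝ)..(n:ℝ), (P (ζ x) ^ 2 + ev f (c - |ζ x|) ^ 2) := by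
        apply intervalIntegral.integral_congr
        intro x _
        simp only []
        rw [Real.norm_eq_abs, abs_of_nonneg (by positivity)]
      rw [this]
      exact hbound _ _ hle
    have hval : (∫ t, (P (ζ t) ^ 2 + ev f (c - |ζ t|) ^ 2))
        = 2 * (Prim P c - Prim P (-c)) := by
      have h1 := MeasureTheory.intervalIntegral_tendsto_integral hInt ha' hb'
      have h2 : Tendsto (fun n : ℕ => ∫ t in -(n:ℝ)..(n:ℝ),
          (P (ζ t) ^ 2 + ev f (c - |ζ t|) ^ 2)) atTop
          (nhds (2 * (Prim P c - Prim P (-c)))) := by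
        simp only [hFTC]
        apply Tendsto.const_mul
        apply Tendsto.sub
        · exact ((Prim_continuous hPcont).continuousAt.tendsto).comp (hζtop.comp hb')
        · exact ((Prim_continuous hPcont).continuousAt.tendsto).comp (hζbot.comp ha')
      exact tendsto_nhds_unique h1 h2
    have hTval : 2 * (Prim P c - Prim P (-c)) = 4 * ∫ l in (0:ℝ)..c, ev f l := by
      rw [Prim_sub hPcont]
      have : (∫ s in (-c)..c, P s) = 2 * ∫ x in (0:ℝ)..c, ev f x :=
        even_integral f hf hcpos.le
      rw [this]; ring
    first
      | exact hInt
      | rw [hval, hTval]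
  }



end Hetero
lemma scalar_mem {f Fb : ℝ → ℝ} {c₁ c₂ c₃ δN dN : ℝ}
    (hf : ContinuousOn f (Ici 0)) (hfnn : ∀ t, 0 ≤ t → 0 ≤ f t)
    (hc₁ : 0 < c₁) (hc₂ : 0 < c₂) (hc₃ : 0 < c₃) (hδN : 0 < δN) (hdNpos : 0 < dN)
    (hδNdN : 2 * δN < dN)
    (hH1 : ∀ t, 0 ≤ t → t ≤ δN ^ 2 → c₁ * t ≤ f t ∧ f t ≤ c₂ * t)
    (hH2 : ∀ t, δN ^ 2 ≤ t → c₃ ≤ f t)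
    (hFbm : ∀ s : ℝ, s ≤ 0 → Fb s = f ((dN / 2 + s) ^ 2))
    (hFbp : ∀ s : ℝ, 0 ≤ s → Fb s = f ((dN / 2 - s) ^ 2)) :
    (4 * ∫ l in (0:ℝ)..(dN / 2), ev f l) ∈ connScalar Fb dN := by
  obtain ⟨ζ, ζd, hderiv, hlt, htop, hbot, hInt, hval⟩ :=
    exists_heteroclinic hf hfnn hc₁ hc₂ hc₃ hδN hdNpos hδNdN hH1 hH2
  have hcongr : (fun t => ζd t ^ 2 + Fb (ζ t))
      = fun t => ζd t ^ 2 + ev f (dN / 2 - |ζ t|) ^ 2 := by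
    funext t
    rw [Fb_eq_ev_sq hfnn hFbm hFbp]
  exact ⟨ζ, ζd, hderiv, htop, hbot, hcongr ▸ hInt, by rw [hcongr, hval]⟩

lemma vector_mem {k : ℕ} {Np Nm : Set (EuclideanSpace ℝ (Fin k))}
    {f : ℝ → ℝ} {c₁ c₂ c₃ δN dN : ℝ}
    (hNpK : IsCompact Np) (hNmK : IsCompact Nm)
    (hNp : Np.Nonempty) (hNm : Nm.Nonempty)
    (hdN : dN = sInf {r | ∃ p ∈ Np, ∃ q ∈ Nm, r = dist p q})
    (hf : ContinuousOn f (Ici 0)) (hfnn : ∀ t, 0 ≤ t → 0 ≤ f t)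
    (hc₁ : 0 < c₁) (hc₂ : 0 < c₂) (hc₃ : 0 < c₃) (hδN : 0 < δN) (hdNpos : 0 < dN)
    (hδNdN : 2 * δN < dN)
    (hH1 : ∀ t, 0 ≤ t → t ≤ δN ^ 2 → c₁ * t ≤ f t ∧ f t ≤ c₂ * t)
    (hH2 : ∀ t, δN ^ 2 ≤ t → c₃ ≤ f t)
    (F : EuclideanSpace ℝ (Fin k) → ℝ)
    (hF : ∀ p, F p = f (infDist p (Np ∪ Nm) ^ 2))
    {pp pm : EuclideanSpace ℝ (Fin k)} (hpp : pp ∈ Np) (hpm : pm ∈ Nm)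
    (hd : dist pp pm = dN) :
    (4 * ∫ l in (0:ℝ)..(dN / 2), ev f l) ∈ connEnergies F pp pm := by
  obtain ⟨ζ, ζd, hderiv, hlt, htop, hbot, hInt, hval⟩ :=
    exists_heteroclinic hf hfnn hc₁ hc₂ hc₃ hδN hdNpos hδNdN hH1 hH2
  set u := dN⁻¹ • (pp - pm) with hu_def
  have hnorm : ‖pp - pm‖ = dN := by rw [← dist_eq_norm]; exact hd
  have hu : ‖u‖ = 1 := by
    rw [hu_def, norm_smul, hnorm, Real.norm_eq_abs,
      abs_of_pos (inv_pos.mpr hdNpos), inv_mul_cancel₀ hdNpos.ne']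
  have hdNu : dN • u = pp - pm := by
    rw [hu_def, smul_smul, mul_inv_cancel₀ hdNpos.ne', one_smul]
  set ξ : ℝ → EuclideanSpace ℝ (Fin k) := fun t => pm + (dN / 2 + ζ t) • u with hξ_def
  set ξd : ℝ → EuclideanSpace ℝ (Fin k) := fun t => ζd t • u with hξd_def
  have hξderiv : ∀ t, HasDerivAt ξ (ξd t) t := by
    intro t
    have h1 : HasDerivAt (fun t => dN / 2 + ζ t) (ζd t) t := (hderiv t).const_add _
    exact (h1.smul_const u).const_add pm
  have hg : Continuous fun x : ℝ => pm + (dN / 2 + x) • u := by continuity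
  have hξtop : Tendsto ξ atTop (nhds pp) := by
    have h := (hg.tendsto (dN / 2)).comp htop
    have heq : pm + (dN / 2 + dN / 2) • u = pp := by
      have h2 : dN / 2 + dN / 2 = dN := by ring
      rw [h2, hdNu]; abel
    rw [heq] at h
    exact h
  have hξbot : Tendsto ξ atBot (nhds pm) := by
    have h := (hg.tendsto (-(dN / 2))).comp hbot
    have heq : pm + (dN / 2 + -(dN / 2)) • u = pm := by
      rw [add_neg_cancel, zero_smul, add_zero]
    rw [heq] at h
    exact h
  have hFξ : ∀ t, F (ξ t) = ev f (dN / 2 - |ζ t|) ^ 2 := by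
    intro t
    rw [hF, hξ_def]
    simp only []
    rw [segment_infDist hNpK hNmK hNp hNm hdN hdNpos hpp hpm hd (hlt t).le,
      ev_sq hfnn]
  have hnξd : ∀ t, ‖ξd t‖ ^ 2 = ζd t ^ 2 := by
    intro t
    rw [hξd_def]
    simp only []
    rw [norm_smul, hu, mul_one, Real.norm_eq_abs, sq_abs]
  have hcongr : (fun t => ‖ξd t‖ ^ 2 + F (ξ t))
      = fun t => ζd t ^ 2 + ev f (dN / 2 - |ζ t|) ^ 2 := by
    funext t
    rw [hnξd, hFξ]
  exact ⟨ξ, ξd, hξderiv, hξtop, hξbot, hcongr ▸ hInt, by rw [hcongr, hval]⟩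

lemma connEnergies_nonempty {k : ℕ} {Np Nm : Set (EuclideanSpace ℝ (Fin k))}
    {f : ℝ → ℝ} (hf : ContinuousOn f (Ici 0)) (hf0 : f 0 = 0)
    (F : EuclideanSpace ℝ (Fin k) → ℝ)
    (hF : ∀ p, F p = f (infDist p (Np ∪ Nm) ^ 2))
    {pp pm : EuclideanSpace ℝ (Fin k)} (hpp : pp ∈ Np) (hpm : pm ∈ Nm) :
    (connEnergies F pp pm).Nonempty := by
  set st := Real.smoothTransition
  set ξ : ℝ → EuclideanSpace ℝ (Fin k) := fun t => pm + st t • (pp - pm) with hξ_def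
  set ξd : ℝ → EuclideanSpace ℝ (Fin k) := fun t => deriv st t • (pp - pm) with hξd_def
  have hstd : ∀ t, HasDerivAt st (deriv st t) t := fun t =>
    (((Real.smoothTransition.contDiff (n := 1)).differentiable (by norm_num)) t).hasDerivAt
  have hξderiv : ∀ t, HasDerivAt ξ (ξd t) t := fun t =>
    ((hstd t).smul_const (pp - pm)).const_add pm
  have hξ_ge : ∀ t : ℝ, 1 ≤ t → ξ t = pp := by
    intro t ht
    rw [hξ_def]
    simp only [st, Real.smoothTransition.one_of_one_le ht, one_smul]
    abel
  have hξ_le : ∀ t : ℝ, t ≤ 0 → ξ t = pm := by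
    intro t ht
    rw [hξ_def]
    simp only [st, Real.smoothTransition.zero_of_nonpos ht, zero_smul, add_zero]
  have hξtop : Tendsto ξ atTop (nhds pp) := by
    apply Tendsto.congr' _ tendsto_const_nhds
    filter_upwards [Ici_mem_atTop (1:ℝ)] with t ht
    exact (hξ_ge t ht).symm
  have hξbot : Tendsto ξ atBot (nhds pm) := by
    apply Tendsto.congr' _ tendsto_const_nhds
    filter_upwards [Iic_mem_atBot (0:ℝ)] with t ht
    exact (hξ_le t ht).symm
  have hderiv0 : ∀ t : ℝ, t < 0 ∨ 1 < t → deriv st t = 0 := by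
    intro t ht
    rcases ht with ht | ht
    · have hev : st =ᶠ[nhds t] fun _ => 0 := by
        filter_upwards [Iio_mem_nhds ht] with x hx
        exact Real.smoothTransition.zero_of_nonpos (le_of_lt hx)
      rw [hev.deriv_eq, deriv_const]
    · have hev : st =ᶠ[nhds t] fun _ => 1 := by
        filter_upwards [Ioi_mem_nhds ht] with x hx
        exact Real.smoothTransition.one_of_one_le (le_of_lt hx)
      rw [hev.deriv_eq, deriv_const]
  have hξcont : Continuous ξ := by
    rw [hξ_def]
    exact continuous_const.add (Real.smoothTransition.continuous.smul continuous_const)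
  have hFcont : Continuous fun t => F (ξ t) := by
    have h2 : Continuous fun t => infDist (ξ t) (Np ∪ Nm) ^ 2 :=
      ((continuous_infDist_pt (Np ∪ Nm)).comp hξcont).pow 2
    have h3 : (fun t => F (ξ t)) = fun t => f (infDist (ξ t) (Np ∪ Nm) ^ 2) :=
      funext fun t => hF _
    rw [h3]
    exact hf.comp_continuous h2 fun t => mem_Ici.mpr (sq_nonneg _)
  have hdcont : Continuous fun t => ‖ξd t‖ ^ 2 := by
    have h1 : Continuous (deriv st) :=
      (Real.smoothTransition.contDiff (n := 1)).continuous_deriv le_rfl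
    rw [hξd_def]
    exact ((h1.smul continuous_const).norm).pow 2
  have hecont : Continuous fun t => ‖ξd t‖ ^ 2 + F (ξ t) := hdcont.add hFcont
  have hsupp : ∀ t, t ∉ Icc (0:ℝ) 1 → ‖ξd t‖ ^ 2 + F (ξ t) = 0 := by
    intro t ht
    have hcase : t < 0 ∨ 1 < t := by
      rcases lt_or_ge t 0 with h | h
      · exact Or.inl h
      · right
        by_contra hc
        push_neg at hc
        exact ht ⟨h, hc⟩
    have hd0 : ξd t = 0 := by
      rw [hξd_def]
      simp only [hderiv0 t hcase, zero_smul]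
    have hF0 : F (ξ t) = 0 := by
      rcases hcase with h | h
      · rw [hξ_le t h.le, hF, infDist_zero_of_mem (mem_union_right _ hpm)]
        simpa using hf0
      · rw [hξ_ge t h.le, hF, infDist_zero_of_mem (mem_union_left _ hpp)]
        simpa using hf0
    rw [hd0, hF0]
    simp
  have hInt : Integrable fun t => ‖ξd t‖ ^ 2 + F (ξ t) :=
    hecont.integrable_of_hasCompactSupport (HasCompactSupport.intro isCompact_Icc hsupp)
  exact ⟨_, ξ, ξd, hξderiv, hξtop, hξbot, hInt, rfl⟩
lemma chain_bound {h q : ℝ → ℝ} (hh : Continuous h) (hq : Integrable q)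
    (loc : ∀ u : ℝ, ∀ᶠ v in nhdsWithin u (Ici u), h v - h u ≤ ∫ x in u..v, q x) :
    ∀ s t : ℝ, s ≤ t → h t - h s ≤ ∫ x in s..t, q x := by
  intro s t hst
  set S := Icc s t ∩ {x | h x - h s - (∫ y in s..x, q y) ≤ 0} with hS_def
  have hprim : Continuous fun x => ∫ y in s..x, q y :=
    intervalIntegral.continuous_primitive (fun a b => hq.intervalIntegrable) s
  have hclosed : IsClosed S :=
    isClosed_Icc.inter (isClosed_le (by fun_prop) continuous_const)
  have hsS : s ∈ S := by
    constructor
    · exact ⟨le_refl s, hst⟩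
    · simp
  have hbdd : BddAbove S := ⟨t, fun x hx => hx.1.2⟩
  set τ := sSup S with hτ_def
  have hτS : τ ∈ S := hclosed.csSup_mem ⟨s, hsS⟩ hbdd
  have hsτ : s ≤ τ := le_csSup hbdd hsS
  have hτt : τ ≤ t := hτS.1.2
  rcases eq_or_lt_of_le hτt with heq | hlt
  · have := hτS.2
    rw [heq] at this
    simp only [mem_setOf_eq] at this
    linarith
  · exfalso
    have hev : {v | h v - h τ ≤ ∫ x in τ..v, q x} ∈ nhdsWithin τ (Ioi τ) :=
      nhdsWithin_mono τ Ioi_subset_Ici_self (loc τ)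
    have hIoo : Ioo τ t ∈ nhdsWithin τ (Ioi τ) :=
      Ioo_mem_nhdsGT_of_mem ⟨le_refl τ, hlt⟩
    obtain ⟨v, hv1, hv2⟩ := Filter.nonempty_of_mem (Filter.inter_mem hev hIoo)
    have hvS : v ∈ S := by
      constructor
      · exact ⟨le_trans hsτ hv2.1.le, hv2.2.le⟩
      · have h1 : h τ - h s - (∫ y in s..τ, q y) ≤ 0 := hτS.2
        have h2 : h v - h τ ≤ ∫ x in τ..v, q x := hv1
        have h3 : (∫ y in s..τ, q y) + (∫ y in τ..v, q y) = ∫ y in s..v, q y :=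
          intervalIntegral.integral_add_adjacent_intervals hq.intervalIntegrable
            hq.intervalIntegrable
        simp only [mem_setOf_eq]
        linarith
    have := le_csSup hbdd hvS
    rw [← hτ_def] at this
    exact absurd this (not_le.mpr hv2.1)

lemma scalar_lower {f Fb : ℝ → ℝ} {dN : ℝ}
    (hf : ContinuousOn f (Ici 0)) (hfnn : ∀ t, 0 ≤ t → 0 ≤ f t)
    (hdNpos : 0 < dN) (hf0 : f 0 = 0)
    (hFbm : ∀ s : ℝ, s ≤ 0 → Fb s = f ((dN / 2 + s) ^ 2))
    (hFbp : ∀ s : ℝ, 0 ≤ s → Fb s = f ((dN / 2 - s) ^ 2)) :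
    ∀ e ∈ connScalar Fb dN, (4 * ∫ l in (0:ℝ)..(dN / 2), ev f l) ≤ e := by
  rintro e ⟨ζ, ζd, hζ, htop, hbot, hInt, rfl⟩
  set c := dN / 2 with hc_def
  have hcpos : 0 < c := by positivity
  set P : ℝ → ℝ := fun x => ev f (c - |x|) with hP_def
  have hPcont : Continuous P := (ev_cont hf).comp (by continuity)
  have hPnn : ∀ x, 0 ≤ P x := fun x => ev_nonneg f _
  have hPc0 : P c = 0 := by
    rw [hP_def]
    simp only [abs_of_nonneg hcpos.le, sub_self, ev]
    rw [show (0:ℝ)^2 = 0 by ring, hf0, Real.sqrt_zero]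
  have hPmc0 : P (-c) = 0 := by
    rw [hP_def]
    simp only [abs_neg, abs_of_nonneg hcpos.le, sub_self, ev]
    rw [show (0:ℝ)^2 = 0 by ring, hf0, Real.sqrt_zero]
  set clampc : ℝ → ℝ := fun x => max (-c) (min x c) with hclampc_def
  have hclampc_cont : Continuous clampc := by fun_prop
  set Pc : ℝ → ℝ := fun x => P (clampc x) with hPc_def
  have hPc_cont : Continuous Pc := hPcont.comp hclampc_cont
  have hPc_nn : ∀ x, 0 ≤ Pc x := fun x => hPnn _
  have hFb_eq : ∀ x, Fb x = P x ^ 2 := fun x => Fb_eq_ev_sq hfnn hFbm hFbp x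
  have hFb_nn : ∀ x, 0 ≤ Fb x := fun x => Fb_nonneg hfnn hFbm hFbp x
  have hclamp_id : ∀ x, -c ≤ x → x ≤ c → clampc x = x := by
    intro x h1 h2
    rw [hclampc_def]
    simp only []
    rw [min_eq_left h2, max_eq_right h1]
  have hPc_sq_le : ∀ x, Pc x ^ 2 ≤ Fb x := by
    intro x
    rcases lt_or_ge x (-c) with h | h
    · have h1 : clampc x = -c := by
        rw [hclampc_def]
        simp only []
        rw [min_eq_left (by linarith), max_eq_left h.le]
      rw [hPc_def]
      simp only [h1]
      rw [hPmc0]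
      simpa using hFb_nn x
    · rcases le_or_gt x c with h2 | h2
      · rw [hPc_def]
        simp only [hclamp_id x h h2]
        rw [hFb_eq]
      · have h1 : clampc x = c := by
          rw [hclampc_def]
          simp only []
          rw [min_eq_right h2.le, max_eq_right (by linarith)]
        rw [hPc_def]
        simp only [h1]
        rw [hPc0]
        simpa using hFb_nn x
  set Ψ := Prim Pc with hΨ_def
  set g := fun t => Ψ (ζ t) with hg_def
  have hg : ∀ t, HasDerivAt g (Pc (ζ t) * ζd t) t := fun t =>
    (Prim_hasDerivAt hPc_cont (ζ t)).comp t (hζ t)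
  have hζcont : Continuous ζ :=
    continuous_iff_continuousAt.mpr fun t => (hζ t).differentiableAt.continuousAt
  set D := fun t => Pc (ζ t) * ζd t with hD_def
  have hDm : Measurable D := by
    have hDg : D = deriv g := funext fun t => ((hg t).deriv).symm
    rw [hDg]
    exact measurable_deriv g
  have hDbound : ∀ t, |D t| ≤ 1/2 * (ζd t ^ 2 + Fb (ζ t)) := by
    intro t
    have h1 : |D t| = Pc (ζ t) * |ζd t| := by
      rw [hD_def]
      simp only []
      rw [abs_mul, abs_of_nonneg (hPc_nn _)]
    rw [h1]
    nlinarith [sq_nonneg (Pc (ζ t) - |ζd t|), hPc_sq_le (ζ t), sq_abs (ζd t)]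
  have hDint : Integrable D := by
    apply Integrable.mono' (hInt.const_mul (1/2)) hDm.aestronglyMeasurable
    filter_upwards with t
    rw [Real.norm_eq_abs]
    exact hDbound t
  have hFTC : ∀ a b : ℝ, (∫ t in a..b, D t) = g b - g a := fun a b =>
    intervalIntegral.integral_eq_sub_of_hasDerivAt (fun x _ => hg x)
      hDint.intervalIntegrable
  have hInt2 := hInt.const_mul (1/2 : ℝ)
  have hbound : ∀ n : ℕ, g n - g (-(n:ℝ)) ≤ 1/2 * ∫ t, (ζd t ^ 2 + Fb (ζ t)) := by
    intro n
    have hle : -(n:ℝ) ≤ (n:ℝ) := by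
      have := Nat.cast_nonneg (α := ℝ) n
      linarith
    rw [← hFTC]
    calc (∫ t in -(n:ℝ)..(n:ℝ), D t)
        ≤ ∫ t in -(n:ℝ)..(n:ℝ), 1/2 * (ζd t ^ 2 + Fb (ζ t)) := by
          apply intervalIntegral.integral_mono_on hle hDint.intervalIntegrable
            hInt2.intervalIntegrable
          intro x _
          exact le_trans (le_abs_self _) (hDbound x)
      _ ≤ ∫ t, 1/2 * (ζd t ^ 2 + Fb (ζ t)) := by
          rw [intervalIntegral.integral_of_le hle]
          apply MeasureTheory.setIntegral_le_integral hInt2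
          filter_upwards with t
          have := sq_nonneg (ζd t)
          have := hFb_nn (ζ t)
          positivity
      _ = 1/2 * ∫ t, (ζd t ^ 2 + Fb (ζ t)) := by
          rw [MeasureTheory.integral_const_mul]
  have hb' : Tendsto (fun n : ℕ => (n:ℝ)) atTop atTop := tendsto_natCast_atTop_atTop
  have ha' : Tendsto (fun n : ℕ => -(n:ℝ)) atTop atBot :=
    tendsto_neg_atBot_iff.mpr tendsto_natCast_atTop_atTop
  have hΨcont : Continuous Ψ := Prim_continuous hPc_cont
  have hlim : Tendsto (fun n : ℕ => g (n:ℝ) - g (-(n:ℝ))) atTop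
      (nhds (Ψ c - Ψ (-c))) := by
    apply Tendsto.sub
    · exact (hΨcont.tendsto c).comp (htop.comp hb')
    · exact (hΨcont.tendsto (-c)).comp (hbot.comp ha')
  have hmain : Ψ c - Ψ (-c) ≤ 1/2 * ∫ t, (ζd t ^ 2 + Fb (ζ t)) :=
    le_of_tendsto hlim (Filter.Eventually.of_forall hbound)
  have hval : Ψ c - Ψ (-c) = 2 * ∫ x in (0:ℝ)..c, ev f x := by
    rw [hΨ_def, Prim_sub hPc_cont]
    have hcongr : ∫ s in (-c)..c, Pc s = ∫ s in (-c)..c, P s := by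
      apply intervalIntegral.integral_congr
      intro x hx
      rw [uIcc_of_le (by linarith)] at hx
      rw [hPc_def]
      simp only [hclamp_id x hx.1 hx.2]
    rw [hcongr]
    exact even_integral f hf hcpos.le
  rw [hval] at hmain
  linarith
lemma vector_lower {k : ℕ} {Np Nm : Set (EuclideanSpace ℝ (Fin k))}
    {f : ℝ → ℝ} {dN : ℝ}
    (hNpK : IsCompact Np) (hNmK : IsCompact Nm)
    (hNp : Np.Nonempty) (hNm : Nm.Nonempty)
    (hdN : dN = sInf {r | ∃ p ∈ Np, ∃ q ∈ Nm, r = dist p q}) (hdNpos : 0 < dN)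
    (hf : ContinuousOn f (Ici 0)) (hfnn : ∀ t, 0 ≤ t → 0 ≤ f t)
    (F : EuclideanSpace ℝ (Fin k) → ℝ)
    (hF : ∀ p, F p = f (infDist p (Np ∪ Nm) ^ 2))
    {pp pm : EuclideanSpace ℝ (Fin k)} (hpp : pp ∈ Np) (hpm : pm ∈ Nm) :
    ∀ e ∈ connEnergies F pp pm, (4 * ∫ l in (0:ℝ)..(dN / 2), ev f l) ≤ e := by
  rintro e ⟨ξ, ξd, hξd, htop, hbot, hInt, rfl⟩
  set c := dN / 2 with hc_def
  have hcpos : 0 < c := by positivity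
  set EI := fun t => ‖ξd t‖ ^ 2 + F (ξ t) with hEI_def
  have hF_nn : ∀ z, 0 ≤ F z := fun z => (hF z) ▸ hfnn _ (sq_nonneg _)
  have hEI_nn : ∀ t, 0 ≤ EI t := by
    intro t
    have := hF_nn (ξ t)
    have := sq_nonneg ‖ξd t‖
    rw [hEI_def]
    simp only []
    linarith
  have hE_nn : 0 ≤ ∫ t, EI t := integral_nonneg hEI_nn
  have hξcont : Continuous ξ :=
    continuous_iff_continuousAt.mpr fun t => (hξd t).differentiableAt.continuousAt
  set A := fun u : ℝ => infDist (ξ u) Nm with hA_def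
  set B := fun u : ℝ => infDist (ξ u) Np with hB_def
  have hAcont : Continuous A := (continuous_infDist_pt Nm).comp hξcont
  have hBcont : Continuous B := (continuous_infDist_pt Np).comp hξcont
  have hsum : ∀ u, dN ≤ B u + A u := fun u =>
    sum_infDist_ge hNpK hNmK hNp hNm hdN (ξ u)
  have hFval : ∀ u, F (ξ u) = f (min (A u) (B u) ^ 2) := by
    intro u
    rw [hF, infDist_union_min _ hNp hNm, min_comm]
  set sF := fun u => ev f (min (A u) (B u)) with hsF_def
  have hsF_cont : Continuous sF := (ev_cont hf).comp (hAcont.min hBcont)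
  have hsF_nn : ∀ u, 0 ≤ sF u := fun u => ev_nonneg f _
  have hsF_sq : ∀ u, sF u ^ 2 = F (ξ u) := by
    intro u
    rw [hsF_def]
    simp only []
    rw [ev_sq hfnn, hFval]
  have hLip : ∀ (s : Set (EuclideanSpace ℝ (Fin k))) (x y : EuclideanSpace ℝ (Fin k)),
      |infDist x s - infDist y s| ≤ ‖x - y‖ := by
    intro s x y
    rw [abs_sub_le_iff]
    constructor
    · have := infDist_le_infDist_add_dist (s := s) (x := x) (y := y)
      rw [dist_eq_norm] at this
      linarith
    · have := infDist_le_infDist_add_dist (s := s) (x := y) (y := x)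
      rw [dist_eq_norm, norm_sub_rev] at this
      linarith
  have hm : Measurable ξd := by
    have h1 : ξd = deriv ξ := funext fun t => ((hξd t).deriv).symm
    rw [h1]
    exact measurable_deriv ξ
  have hdom : ∀ t, ‖ξd t‖ ≤ 1/2 + 1/2 * EI t := by
    intro t
    have h1 := hF_nn (ξ t)
    rw [hEI_def]
    simp only []
    nlinarith [sq_nonneg (‖ξd t‖ - 1), norm_nonneg (ξd t)]
  have hdomInt : ∀ a b : ℝ, IntegrableOn (fun t => 1/2 + 1/2 * EI t) (Ioc a b) := by
    intro a b
    exact (integrableOn_const measure_Ioc_lt_top.ne).add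
      ((hInt.const_mul (1/2)).integrableOn)
  have hnormInt : ∀ a b : ℝ, a ≤ b → IntervalIntegrable (fun u => ‖ξd u‖) volume a b := by
    intro a b hab
    rw [intervalIntegrable_iff_integrableOn_Ioc_of_le hab]
    apply Integrable.mono' (hdomInt a b) (hm.norm.aestronglyMeasurable.restrict)
    filter_upwards with t
    rw [Real.norm_eq_abs, abs_of_nonneg (norm_nonneg _)]
    exact hdom t
  have hvecInt : ∀ a b : ℝ, a ≤ b → IntervalIntegrable ξd volume a b := by
    intro a b hab
    rw [intervalIntegrable_iff_integrableOn_Ioc_of_le hab]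
    apply Integrable.mono' (hdomInt a b) (hm.aestronglyMeasurable.restrict)
    filter_upwards with t
    exact hdom t
  have hFTCξ : ∀ a b : ℝ, a ≤ b → ‖ξ b - ξ a‖ ≤ ∫ u in a..b, ‖ξd u‖ := by
    intro a b hab
    have h1 : (∫ u in a..b, ξd u) = ξ b - ξ a :=
      intervalIntegral.integral_eq_sub_of_hasDerivAt (fun x _ => hξd x) (hvecInt a b hab)
    rw [← h1]
    exact intervalIntegral.norm_integral_le_integral_norm hab
  set h := fun u => G f (min (A u) c) - G f (min (B u) c) with hh_def
  have hhcont : Continuous h :=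
    ((G_continuous hf).comp (hAcont.min continuous_const)).sub
      ((G_continuous hf).comp (hBcont.min continuous_const))
  -- main ε-estimate
  have hmain : ∀ ε : ℝ, 0 < ε →
      2 * G f c ≤ (1+ε)/2 * (∫ t, EI t) + ε * ∫ u : ℝ, (1 + u^2)⁻¹ := by
    intro ε hε
    set w := fun u : ℝ => (1 + u^2)⁻¹ with hw_def
    have hw_pos : ∀ u, 0 < w u := by intro u; rw [hw_def]; positivity
    have hw_le1 : ∀ u, w u ≤ 1 := by
      intro u
      rw [hw_def]
      simp only []
      rw [inv_le_one_iff₀]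
      right
      nlinarith
    have hw_ratio : ∀ u₀ u : ℝ, |u - u₀| ≤ 1 → w u₀ ≤ 3 * w u := by
      intro u₀ u hd
      have habs := abs_le.mp hd
      have hd2 : (u - u₀)^2 ≤ 1 := by nlinarith [habs.1, habs.2]
      have key : (1 + u^2) ≤ 3 * (1 + u₀^2) := by
        nlinarith [hd2, sq_nonneg (2*u₀ - u)]
      have h2 : (0:ℝ) < 1 + u^2 := by positivity
      have h3 : (0:ℝ) < 1 + u₀^2 := by positivity
      rw [hw_def]
      simp only []
      rw [show (3:ℝ) * (1 + u^2)⁻¹ = ((1 + u^2)/3)⁻¹ by field_simp]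
      apply inv_anti₀ (by positivity)
      linarith
    have hwInt : Integrable w := integrable_inv_one_add_sq
    set q := fun u => (1+ε)/2 * EI u + ε * w u with hq_def
    have hqInt : Integrable q := (hInt.const_mul _).add (hwInt.const_mul ε)
    have hq_nn : ∀ u, 0 ≤ q u := by
      intro u
      apply add_nonneg (mul_nonneg (by linarith) (hEI_nn u))
        (mul_nonneg hε.le (hw_pos u).le)
    have loc : ∀ u₀ : ℝ, ∀ᶠ v in nhdsWithin u₀ (Ici u₀),
        h v - h u₀ ≤ ∫ x in u₀..v, q x := by
      intro u₀
      set ε₀ := ε * w u₀ / 3 with hε₀_def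
      have hε₀pos : 0 < ε₀ := by
        have := hw_pos u₀
        rw [hε₀_def]
        positivity
      set r₀ := sF u₀ with hr₀_def
      have hM_nn : 0 ≤ r₀ + ε₀ := add_nonneg (hsF_nn u₀) hε₀pos.le
      have hGeom : ∃ δ₂ > 0, ∀ v, u₀ ≤ v → v - u₀ ≤ δ₂ →
          h v - h u₀ ≤ (r₀ + ε₀) * ‖ξ v - ξ u₀‖ := by
        have h2c : dN = 2*c := by rw [hc_def]; ring
        have hevat : ∀ x₀ : ℝ, ∃ ρ > 0, ∀ x, |x - x₀| ≤ ρ →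
            |ev f x - ev f x₀| ≤ ε₀/2 := by
          intro x₀
          have hca := (ev_cont hf).continuousAt (x := x₀)
          rw [Metric.continuousAt_iff] at hca
          obtain ⟨δ', hδ'pos, hδ'⟩ := hca (ε₀/2) (by linarith)
          refine ⟨δ'/2, by linarith, fun x hx => ?_⟩
          have h1 := hδ' (x := x) (by rw [Real.dist_eq]; linarith)
          rw [Real.dist_eq] at h1
          exact h1.le
        have hξat : ∀ η : ℝ, 0 < η → ∃ δ > 0, ∀ v, |v - u₀| ≤ δ →
            ‖ξ v - ξ u₀‖ ≤ η := by
          have hca := hξcont.continuousAt (x := u₀)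
          rw [Metric.continuousAt_iff] at hca
          intro η hη
          obtain ⟨δ', hδ'pos, hδ'⟩ := hca η hη
          refine ⟨δ'/2, by linarith, fun v hv => ?_⟩
          have h1 := hδ' (x := v) (by rw [Real.dist_eq]; linarith)
          rw [dist_eq_norm] at h1
          exact h1.le
        rcases lt_or_ge (A u₀) c with hA1 | hA1
        · -- Case 1
          have hB1 : c < B u₀ := by have := hsum u₀; linarith
          obtain ⟨ρA, hρApos, hρA⟩ := hevat (A u₀)
          obtain ⟨δ₂, hδ₂pos, hδ₂⟩ := hξat (min ρA ((B u₀ - c)/2))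
            (lt_min hρApos (by linarith))
          refine ⟨δ₂, hδ₂pos, fun v hv1 hv2 => ?_⟩
          have hξv := hδ₂ v (by rw [abs_of_nonneg (by linarith)]; linarith)
          have hAv : |A v - A u₀| ≤ ‖ξ v - ξ u₀‖ := hLip Nm (ξ v) (ξ u₀)
          have hBv : |B v - B u₀| ≤ ‖ξ v - ξ u₀‖ := hLip Np (ξ v) (ξ u₀)
          have hAvρ : |A v - A u₀| ≤ ρA :=
            le_trans hAv (le_trans hξv (min_le_left _ _))
          have hBvgt : c < B v := by
            have h1 : ‖ξ v - ξ u₀‖ ≤ (B u₀ - c)/2 := le_trans hξv (min_le_right _ _)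
            have h2 := (abs_le.mp hBv).1
            linarith
          have hBcancel : min (B v) c = min (B u₀) c := by
            rw [min_eq_right hBvgt.le, min_eq_right hB1.le]
          have hAu₀min : min (A u₀) c = A u₀ := min_eq_left hA1.le
          have hr₀A : r₀ = ev f (A u₀) := by
            rw [hr₀_def, hsF_def]
            simp only []
            rw [min_eq_left (by linarith : A u₀ ≤ B u₀)]
          have hdiff : h v - h u₀ = G f (min (A v) c) - G f (A u₀) := by
            rw [hh_def]
            simp only []
            rw [hBcancel, hAu₀min]
            ring
          rw [hdiff]
          rcases le_or_gt (min (A v) c) (A u₀) with hle | hgt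
          · have h1 := G_mono hf hle
            have h2 : 0 ≤ (r₀ + ε₀) * ‖ξ v - ξ u₀‖ := mul_nonneg hM_nn (norm_nonneg _)
            linarith
          · have hwidth : min (A v) c - A u₀ ≤ ‖ξ v - ξ u₀‖ := by
              have h1 : min (A v) c ≤ A v := min_le_left _ _
              have h2 := (abs_le.mp hAv).2
              linarith
            have hbnd : ∀ s ∈ Icc (A u₀) (min (A v) c), ev f s ≤ r₀ + ε₀ := by
              intro s hs
              have h1 : |s - A u₀| ≤ ρA := by
                rw [abs_le]
                constructor
                · linarith [hs.1]
                · have h3 := (abs_le.mp hAvρ).2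
                  have h4 := min_le_left (A v) c
                  linarith [hs.2]
              have h2 := (abs_le.mp (hρA s h1)).2
              rw [hr₀A]
              linarith
            have hGb := G_bound hf hgt.le hbnd
            calc G f (min (A v) c) - G f (A u₀)
                ≤ (r₀ + ε₀) * (min (A v) c - A u₀) := hGb
              _ ≤ (r₀ + ε₀) * ‖ξ v - ξ u₀‖ := mul_le_mul_of_nonneg_left hwidth hM_nn
        · rcases lt_or_ge (B u₀) c with hB1 | hB1
          · -- Case 2
            have hA2 : c < A u₀ := by have := hsum u₀; linarith
            obtain ⟨ρB, hρBpos, hρB⟩ := hevat (B u₀)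
            obtain ⟨δ₂, hδ₂pos, hδ₂⟩ := hξat (min ρB ((A u₀ - c)/2))
              (lt_min hρBpos (by linarith))
            refine ⟨δ₂, hδ₂pos, fun v hv1 hv2 => ?_⟩
            have hξv := hδ₂ v (by rw [abs_of_nonneg (by linarith)]; linarith)
            have hAv : |A v - A u₀| ≤ ‖ξ v - ξ u₀‖ := hLip Nm (ξ v) (ξ u₀)
            have hBv : |B v - B u₀| ≤ ‖ξ v - ξ u₀‖ := hLip Np (ξ v) (ξ u₀)
            have hBvρ : |B v - B u₀| ≤ ρB :=
              le_trans hBv (le_trans hξv (min_le_left _ _))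
            have hAvgt : c < A v := by
              have h1 : ‖ξ v - ξ u₀‖ ≤ (A u₀ - c)/2 := le_trans hξv (min_le_right _ _)
              have h2 := (abs_le.mp hAv).1
              linarith
            have hAcancel : min (A v) c = min (A u₀) c := by
              rw [min_eq_right hAvgt.le, min_eq_right hA2.le]
            have hBu₀min : min (B u₀) c = B u₀ := min_eq_left hB1.le
            have hr₀B : r₀ = ev f (B u₀) := by
              rw [hr₀_def, hsF_def]
              simp only []
              rw [min_eq_right (by linarith : B u₀ ≤ A u₀)]
            have hdiff : h v - h u₀ = G f (B u₀) - G f (min (B v) c) := by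
              rw [hh_def]
              simp only []
              rw [hAcancel, hBu₀min]
              ring
            rw [hdiff]
            rcases le_or_gt (B u₀) (min (B v) c) with hle | hgt
            · have h1 := G_mono hf hle
              have h2 : 0 ≤ (r₀ + ε₀) * ‖ξ v - ξ u₀‖ :=
                mul_nonneg hM_nn (norm_nonneg _)
              linarith
            · have hminBv : min (B v) c = B v := by
                rcases le_total (B v) c with hbc | hbc
                · exact min_eq_left hbc
                · exfalso
                  rw [min_eq_right hbc] at hgt
                  linarith
              have hwidth : B u₀ - min (B v) c ≤ ‖ξ v - ξ u₀‖ := by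
                rw [hminBv]
                have h2 := (abs_le.mp hBv).1
                linarith
              have hbnd : ∀ s ∈ Icc (min (B v) c) (B u₀), ev f s ≤ r₀ + ε₀ := by
                intro s hs
                have h1 : |s - B u₀| ≤ ρB := by
                  rw [abs_le]
                  constructor
                  · have h3 := (abs_le.mp hBvρ).1
                    rw [hminBv] at hs
                    linarith [hs.1]
                  · linarith [hs.2]
                have h2 := (abs_le.mp (hρB s h1)).2
                rw [hr₀B]
                linarith
              have hGb := G_bound hf hgt.le hbnd
              calc G f (B u₀) - G f (min (B v) c)
                  ≤ (r₀ + ε₀) * (B u₀ - min (B v) c) := hGb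
                _ ≤ (r₀ + ε₀) * ‖ξ v - ξ u₀‖ :=
                    mul_le_mul_of_nonneg_left hwidth hM_nn
          · -- Case 3
            obtain ⟨ρc, hρcpos, hρc⟩ := hevat c
            obtain ⟨δ₂, hδ₂pos, hδ₂⟩ := hξat ρc hρcpos
            refine ⟨δ₂, hδ₂pos, fun v hv1 hv2 => ?_⟩
            have hξv := hδ₂ v (by rw [abs_of_nonneg (by linarith)]; linarith)
            have hAv : |A v - A u₀| ≤ ‖ξ v - ξ u₀‖ := hLip Nm (ξ v) (ξ u₀)
            have hBv : |B v - B u₀| ≤ ‖ξ v - ξ u₀‖ := hLip Np (ξ v) (ξ u₀)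
            have hminAu₀ : min (A u₀) c = c := min_eq_right hA1
            have hminBu₀ : min (B u₀) c = c := min_eq_right hB1
            have hdiff : h v - h u₀
                = (G f (min (A v) c) - G f c) + (G f c - G f (min (B v) c)) := by
              rw [hh_def]
              simp only []
              rw [hminAu₀, hminBu₀]
              ring
            have hterm1 : G f (min (A v) c) - G f c ≤ 0 := by
              linarith [G_mono hf (min_le_right (A v) c)]
            rcases le_or_gt c (B v) with hcb | hcb
            · rw [hdiff, min_eq_right hcb]
              have h2 : 0 ≤ (r₀ + ε₀) * ‖ξ v - ξ u₀‖ :=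
                mul_nonneg hM_nn (norm_nonneg _)
              linarith
            · have hminBv : min (B v) c = B v := min_eq_left hcb.le
              have hBvge : B u₀ - ρc ≤ B v := by
                have h1 := (abs_le.mp (le_trans hBv hξv)).1
                linarith
              have hm₀mem : |min (A u₀) (B u₀) - c| ≤ ρc := by
                rw [abs_le]
                constructor
                · have := le_min hA1 hB1
                  linarith
                · have := min_le_right (A u₀) (B u₀)
                  linarith
              have hr₀ge : ev f c - ε₀/2 ≤ r₀ := by
                have h1 := (abs_le.mp (hρc _ hm₀mem)).1
                rw [hr₀_def, hsF_def]
                simp only []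
                linarith
              have hbnd : ∀ s ∈ Icc (B v) c, ev f s ≤ r₀ + ε₀ := by
                intro s hs
                have h1 : |s - c| ≤ ρc := by
                  rw [abs_le]
                  constructor
                  · linarith [hs.1]
                  · linarith [hs.2]
                have h2 := (abs_le.mp (hρc s h1)).2
                linarith
              have hGb := G_bound hf hcb.le hbnd
              have hwidth : c - B v ≤ ‖ξ v - ξ u₀‖ := by
                have h1 := (abs_le.mp hBv).1
                linarith
              rw [hdiff, hminBv]
              calc (G f (min (A v) c) - G f c) + (G f c - G f (B v))
                  ≤ G f c - G f (B v) := by linarith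
                _ ≤ (r₀ + ε₀) * (c - B v) := hGb
                _ ≤ (r₀ + ε₀) * ‖ξ v - ξ u₀‖ :=
                    mul_le_mul_of_nonneg_left hwidth hM_nn

      obtain ⟨δ₂, hδ₂pos, hGeom⟩ := hGeom
      have hsFw : ∃ δ₃ > 0, ∀ u, |u - u₀| ≤ δ₃ → r₀ - ε₀ ≤ sF u := by
        have hca := hsF_cont.continuousAt (x := u₀)
        rw [Metric.continuousAt_iff] at hca
        obtain ⟨δ', hδ'pos, hδ'⟩ := hca ε₀ hε₀pos
        refine ⟨δ'/2, by linarith, fun u hu => ?_⟩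
        have h1 := hδ' (x := u) (by rw [Real.dist_eq]; linarith)
        rw [Real.dist_eq] at h1
        have := (abs_lt.mp h1).1
        rw [hr₀_def]
        linarith
      obtain ⟨δ₃, hδ₃pos, hsFw⟩ := hsFw
      set δ := min 1 (min δ₂ δ₃) with hδ_def
      have hδpos : 0 < δ := lt_min one_pos (lt_min hδ₂pos hδ₃pos)
      have hδ1 : δ ≤ 1 := min_le_left _ _
      have hδδ₂ : δ ≤ δ₂ := le_trans (min_le_right _ _) (min_le_left _ _)
      have hδδ₃ : δ ≤ δ₃ := le_trans (min_le_right _ _) (min_le_right _ _)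
      filter_upwards [Icc_mem_nhdsGE_of_mem
        (show u₀ ∈ Ico u₀ (u₀ + δ) from ⟨le_refl u₀, by linarith⟩)] with v hv
      have hv1 : u₀ ≤ v := hv.1
      have hv2 : v - u₀ ≤ δ := by linarith [hv.2]
      have step1 : h v - h u₀ ≤ (r₀ + ε₀) * ‖ξ v - ξ u₀‖ :=
        hGeom v hv1 (le_trans hv2 hδδ₂)
      have step2 : (r₀ + ε₀) * ‖ξ v - ξ u₀‖ ≤ (r₀ + ε₀) * ∫ u in u₀..v, ‖ξd u‖ :=
        mul_le_mul_of_nonneg_left (hFTCξ u₀ v hv1) hM_nn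
      have step3 : (r₀ + ε₀) * ∫ u in u₀..v, ‖ξd u‖
          = ∫ u in u₀..v, (r₀ + ε₀) * ‖ξd u‖ :=
        (intervalIntegral.integral_const_mul _ _).symm
      have step4 : (∫ u in u₀..v, (r₀ + ε₀) * ‖ξd u‖) ≤ ∫ x in u₀..v, q x := by
        apply intervalIntegral.integral_mono_on hv1 ((hnormInt u₀ v hv1).const_mul _)
          hqInt.intervalIntegrable
        intro u hu
        have huw : |u - u₀| ≤ δ := by
          rw [abs_of_nonneg (by linarith [hu.1])]
          linarith [hu.2]
        have hr₀u : r₀ ≤ sF u + ε₀ := by linarith [hsFw u (le_trans huw hδδ₃)]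
        have hεw : ε₀ ≤ ε * w u := by
          have hra := hw_ratio u₀ u (le_trans huw hδ1)
          rw [hε₀_def]
          calc ε * w u₀ / 3 ≤ ε * (3 * w u) / 3 := by
                apply div_le_div_of_nonneg_right ?_ (by norm_num)
                exact mul_le_mul_of_nonneg_left hra hε.le
            _ = ε * w u := by ring
        have hε₀half : ε₀ ≤ ε / 2 := by
          rw [hε₀_def]
          have h1 : ε * w u₀ ≤ ε * 1 := mul_le_mul_of_nonneg_left (hw_le1 u₀) hε.le
          linarith
        have hsq := hsF_sq u
        have hEIu : EI u = ‖ξd u‖ ^ 2 + F (ξ u) := rfl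
        have hqu : q u = (1+ε)/2 * EI u + ε * w u := rfl
        rw [hqu, hEIu, ← hsq]
        have hn0 : 0 ≤ ‖ξd u‖ := norm_nonneg _
        nlinarith [sq_nonneg (sF u - ‖ξd u‖), sq_nonneg (‖ξd u‖ - 1),
          hsF_nn u, mul_nonneg hε.le (sq_nonneg ‖ξd u‖),
          mul_nonneg hε.le (sq_nonneg (sF u))]
      linarith
    have hchain := chain_bound hhcont hqInt loc
    have hqpartial : ∀ n : ℕ, h (n:ℝ) - h (-(n:ℝ)) ≤ ∫ u, q u := by
      intro n
      have hle : -(n:ℝ) ≤ (n:ℝ) := by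
        have := Nat.cast_nonneg (α := ℝ) n
        linarith
      calc h (n:ℝ) - h (-(n:ℝ)) ≤ ∫ x in -(n:ℝ)..(n:ℝ), q x := hchain _ _ hle
        _ ≤ ∫ u, q u := by
            rw [intervalIntegral.integral_of_le hle]
            exact MeasureTheory.setIntegral_le_integral hqInt
              (Filter.Eventually.of_forall hq_nn)
    -- limits
    have hppNm : c ≤ infDist pp Nm := by
      obtain ⟨q', hq', hdq'⟩ := hNmK.exists_infDist_eq_dist hNm pp
      rw [hdq']
      calc c ≤ dN := by rw [hc_def]; linarith
        _ ≤ dist pp q' := dN_le_dist hdN hpp hq'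
    have hpmNp : c ≤ infDist pm Np := by
      obtain ⟨q', hq', hdq'⟩ := hNpK.exists_infDist_eq_dist hNp pm
      rw [hdq']
      calc c ≤ dN := by rw [hc_def]; linarith
        _ ≤ dist q' pm := dN_le_dist hdN hq' hpm
        _ = dist pm q' := dist_comm _ _
    set Φ := fun z : EuclideanSpace ℝ (Fin k) =>
      G f (min (infDist z Nm) c) - G f (min (infDist z Np) c) with hΦ_def
    have hΦcont : Continuous Φ :=
      ((G_continuous hf).comp ((continuous_infDist_pt Nm).min continuous_const)).sub
        ((G_continuous hf).comp ((continuous_infDist_pt Np).min continuous_const))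
    have hΦpp : Φ pp = G f c := by
      rw [hΦ_def]
      simp only []
      rw [min_eq_right hppNm, infDist_zero_of_mem hpp, min_eq_left hcpos.le, G_zero,
        sub_zero]
    have hΦpm : Φ pm = -(G f c) := by
      rw [hΦ_def]
      simp only []
      rw [min_eq_right hpmNp, infDist_zero_of_mem hpm, min_eq_left hcpos.le, G_zero,
        zero_sub]
    have hb' : Tendsto (fun n : ℕ => (n:ℝ)) atTop atTop := tendsto_natCast_atTop_atTop
    have ha' : Tendsto (fun n : ℕ => -(n:ℝ)) atTop atBot :=
      tendsto_neg_atBot_iff.mpr tendsto_natCast_atTop_atTop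
    have hΦξ : ∀ u : ℝ, h u = Φ (ξ u) := fun u => rfl
    have hlim : Tendsto (fun n : ℕ => h (n:ℝ) - h (-(n:ℝ))) atTop
        (nhds (2 * G f c)) := by
      have h1 : Tendsto (fun n : ℕ => h (n:ℝ)) atTop (nhds (G f c)) := by
        rw [← hΦpp]
        exact (hΦcont.tendsto pp).comp (htop.comp hb')
      have h2 : Tendsto (fun n : ℕ => h (-(n:ℝ))) atTop (nhds (-(G f c))) := by
        rw [← hΦpm]
        exact (hΦcont.tendsto pm).comp (hbot.comp ha')
      have h3 := h1.sub h2
      have h4 : G f c - -(G f c) = 2 * G f c := by ring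
      rw [h4] at h3
      exact h3
    have hqval : (∫ u, q u) = (1+ε)/2 * (∫ t, EI t) + ε * ∫ u : ℝ, (1 + u^2)⁻¹ := by
      rw [hq_def]
      simp only []
      rw [MeasureTheory.integral_add (hInt.const_mul _) (hwInt.const_mul ε),
        MeasureTheory.integral_const_mul, MeasureTheory.integral_const_mul]
    rw [← hqval]
    exact le_of_tendsto hlim (Filter.Eventually.of_forall hqpartial)

  -- conclusion from hmain
  have hW_nn : 0 ≤ ∫ u : ℝ, (1 + u^2)⁻¹ :=
    integral_nonneg fun u => by positivity
  have hfinal : 2 * G f c ≤ (∫ t, EI t) / 2 := by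
    apply le_of_forall_pos_le_add
    intro ε' hε'
    set Dc := (∫ t, EI t)/2 + ∫ u : ℝ, (1 + u^2)⁻¹ with hDc_def
    have hDc : 0 ≤ Dc := by rw [hDc_def]; linarith
    have hεv : 0 < ε' / (Dc + 1) := by positivity
    have h1 := hmain (ε' / (Dc + 1)) hεv
    have hexpand : (1 + ε' / (Dc + 1))/2 * (∫ t, EI t) + (ε' / (Dc + 1)) * ∫ u : ℝ, (1 + u^2)⁻¹
        = (∫ t, EI t) / 2 + (ε' / (Dc + 1)) * Dc := by
      rw [hDc_def]; ring
    have hstep : (ε' / (Dc + 1)) * Dc ≤ ε' := by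
      rw [div_mul_eq_mul_div, div_le_iff₀ (by linarith : (0:ℝ) < Dc + 1)]
      nlinarith
    rw [hexpand] at h1
    linarith
  have hGc : G f c = ∫ l in (0:ℝ)..c, ev f l := rfl
  linarith
end MCE

theorem minimal_connection_energy
    {k : ℕ}
    (Np Nm : Set (Euc k)) (hNpK : IsCompact Np) (hNmK : IsCompact Nm)
    (hNpc : IsConnected Np) (hNmc : IsConnected Nm) (hdisj : Disjoint Np Nm)
    (dN : ℝ) (hdN : dN = sInf {r | ∃ p ∈ Np, ∃ q ∈ Nm, r = dist p q})
    (hdNpos : 0 < dN)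
    (δN : ℝ) (hδN : 0 < δN) (hδNdN : 2 * δN < dN)
    (hproj : ∃ Pj : Euc k → Euc k,
        ContDiffOn ℝ (⊤ : ℕ∞) Pj {p | infDist p (Np ∪ Nm) ≤ δN} ∧
        ∀ p, infDist p (Np ∪ Nm) ≤ δN →
          Pj p ∈ Np ∪ Nm ∧ dist p (Pj p) = infDist p (Np ∪ Nm))
    (hd2 : ContDiffOn ℝ (⊤ : ℕ∞) (fun p => infDist p (Np ∪ Nm) ^ 2)
        {p | infDist p (Np ∪ Nm) ≤ δN})
    (f : ℝ → ℝ) (hfsm : ContDiffOn ℝ (⊤ : ℕ∞) f (Ici 0)) (hfnn : ∀ t, 0 ≤ t → 0 ≤ f t)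
    (c₁ c₂ c₃ c₄ t₀ : ℝ) (hc₁ : 0 < c₁) (hc₂ : 0 < c₂) (hc₃ : 0 < c₃)
    (hc₄ : 0 < c₄) (ht₀ : 0 < t₀)
    (hH1 : ∀ t, 0 ≤ t → t ≤ δN ^ 2 → c₁ * t ≤ f t ∧ f t ≤ c₂ * t)
    (hH2 : ∀ t, δN ^ 2 ≤ t → c₃ ≤ f t)
    (hH3 : ∀ t, t₀ ≤ t → c₄ * Real.sqrt t ≤ f t)
    (F : Euc k → ℝ) (hF : ∀ p, F p = f (infDist p (Np ∪ Nm) ^ 2))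
    (Fb : ℝ → ℝ)
    (hFbm : ∀ s : ℝ, s ≤ 0 → Fb s = f ((dN / 2 + s) ^ 2))
    (hFbp : ∀ s : ℝ, 0 ≤ s → Fb s = f ((dN / 2 - s) ^ 2))
    :
    c0F F Np Nm = c0Fb Fb dN ∧
      c0F F Np Nm = 4 * ∫ l in (0:ℝ)..(dN / 2), Real.sqrt (f (l ^ 2)) := by
  have hNp : Np.Nonempty := hNpc.nonempty
  have hNm : Nm.Nonempty := hNmc.nonempty
  have hfc : ContinuousOn f (Ici 0) := hfsm.continuousOn
  have hf0 : f 0 = 0 := MCE.f_zero hfnn hc₂ hδN hH1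
  set T := 4 * ∫ l in (0:ℝ)..(dN / 2), Real.sqrt (f (l ^ 2)) with hT_def
  have hT_ev : (4 * ∫ l in (0:ℝ)..(dN / 2), MCE.ev f l) = T := rfl
  -- scalar side
  have hTmem_s : T ∈ connScalar Fb dN := by
    rw [← hT_ev]
    exact MCE.scalar_mem hfc hfnn hc₁ hc₂ hc₃ hδN hdNpos hδNdN hH1 hH2 hFbm hFbp
  have hlow_s : ∀ e ∈ connScalar Fb dN, T ≤ e := by
    rw [← hT_ev]
    exact MCE.scalar_lower hfc hfnn hdNpos hf0 hFbm hFbp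
  have hscalar : c0Fb Fb dN = T :=
    le_antisymm (csInf_le ⟨T, hlow_s⟩ hTmem_s) (le_csInf ⟨T, hTmem_s⟩ hlow_s)
  -- vector side
  obtain ⟨pP, hpP, pM, hpM, hdist⟩ := MCE.exists_min_pair hNpK hNmK hNp hNm hdN
  have hlow_v : ∀ pp ∈ Np, ∀ pm ∈ Nm, ∀ e ∈ connEnergies F pp pm, T ≤ e := by
    intro pp hpp pm hpm
    rw [← hT_ev]
    exact MCE.vector_lower hNpK hNmK hNp hNm hdN hdNpos hfc hfnn F hF hpp hpm
  have hcF_ge : ∀ pp ∈ Np, ∀ pm ∈ Nm, T ≤ cF F pp pm := by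
    intro pp hpp pm hpm
    exact le_csInf (MCE.connEnergies_nonempty hfc hf0 F hF hpp hpm)
      (hlow_v pp hpp pm hpm)
  have hcF_min : cF F pP pM = T := by
    apply le_antisymm
    · apply csInf_le ⟨T, hlow_v pP hpP pM hpM⟩
      rw [← hT_ev]
      exact MCE.vector_mem hNpK hNmK hNp hNm hdN hfc hfnn hc₁ hc₂ hc₃ hδN hdNpos
        hδNdN hH1 hH2 F hF hpP hpM hdist
    · exact hcF_ge pP hpP pM hpM
  have hvec : c0F F Np Nm = T := by
    apply le_antisymm
    · apply csInf_le
      · refine ⟨T, ?_⟩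
        rintro e ⟨pp, hpp, pm, hpm, rfl⟩
        exact hcF_ge pp hpp pm hpm
      · exact ⟨pP, hpP, pM, hpM, hcF_min.symm⟩
    · apply le_csInf
      · exact ⟨cF F pP pM, pP, hpP, pM, hpM, rfl⟩
      · rintro e ⟨pp, hpp, pm, hpm, rfl⟩
        exact hcF_ge pp hpp pm hpm
  exact ⟨by rw [hvec, hscalar], by rw [hvec]⟩
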